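/- For natural numbers k and r, the coefficient of x^r in the polynomial ∏_{j : bit j of k is 1} (1 − x^{2^j}) is nonzero if and only if r AND k = r (bitwise), in which case it equals (−1)^{s(r)} where s(r) is the binary weight of r. -/

import Mathlib

/-!
Expanding the product over subsets `t` of the bit positions of `k`, each `t` contributes
`(-1)^#t X^(∑ j ∈ t, 2^j)`. By uniqueness of binary expansions, the only `t` with
`∑ j ∈ t, 2^j = r` is the set of bit positions of `r`, and it occurs exactly when the bits of
`r` are among those of `k`.
-/

open Polynomial Finset

namespace Nat

theorem sum_digits_two_eq_length_bitIndices (n : ℕ) :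
    (digits 2 n).sum = n.bitIndices.length := by
  induction n using evenOddRec with
  | h0 => simp
  | h_even n ih =>
    rcases n.eq_zero_or_pos with rfl | hn
    · simp
    · rw [digits_def' one_lt_two (by omega)]
      simp [ih]
  | h_odd n ih =>
    rw [digits_def' one_lt_two (by omega), show (2 * n + 1) / 2 = n by omega]
    simp [ih, Nat.add_comm 1]

theorem and_eq_left_iff_testBit {r k : ℕ} :
    r &&& k = r ↔ ∀ i, r.testBit i → k.testBit i := by
  refine ⟨fun h i hi => ?_, fun h => eq_of_testBit_eq fun i => ?_⟩
  · simpa [hi] using congrArg (testBit · i) h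
  · cases hr : r.testBit i <;> simp [hr, h i]

theorem toFinset_bitIndices_subset_iff {r k : ℕ} :
    r.bitIndices.toFinset ⊆ k.bitIndices.toFinset ↔ r &&& k = r := by
  simp [Finset.subset_iff, and_eq_left_iff_testBit]

theorem filter_range_testBit_eq_toFinset_bitIndices (k : ℕ) :
    (range (k + 1)).filter (fun j => k.testBit j) = k.bitIndices.toFinset := by
  ext j
  simp only [mem_filter, mem_range, List.mem_toFinset, mem_bitIndices, and_iff_right_iff_imp]
  intro h
  have hk : 2 ^ j ≤ k := ge_two_pow_of_testBit h
  have hj : j < 2 ^ j := j.lt_two_pow_self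
  omega

end Nat

namespace Polynomial

variable {R : Type*} [CommRing R]

theorem prod_one_sub_X_pow_eq_sum_powerset {ι : Type*} (S : Finset ι) (e : ι → ℕ) :
    ∏ j ∈ S, (1 - X ^ e j : R[X]) = ∑ t ∈ S.powerset, monomial (∑ j ∈ t, e j) ((-1) ^ #t) := by
  simp_rw [sub_eq_add_neg, prod_one_add]
  refine sum_congr rfl fun t _ => ?_
  rw [prod_neg, prod_pow_eq_pow_sum, ← C_mul_X_pow_eq_monomial, C_pow, C_neg, C_1]

theorem coeff_prod_one_sub_X_pow_two_pow (S : Finset ℕ) (r : ℕ) :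
    (∏ j ∈ S, (1 - X ^ 2 ^ j : R[X])).coeff r =
      if r.bitIndices.toFinset ⊆ S then (-1) ^ r.bitIndices.length else 0 := by
  have hsum (t : Finset ℕ) : ∑ j ∈ t, 2 ^ j = r ↔ t = r.bitIndices.toFinset :=
    equivBitIndices.symm_apply_eq
  simp_rw [prod_one_sub_X_pow_eq_sum_powerset, finsetSum_coeff, coeff_monomial, hsum,
    sum_ite_eq', mem_powerset, List.toFinset_card_of_nodup Nat.bitIndices_nodup]

end Polynomial

theorem coeff_subtracting_factor (k r : ℕ) :
    ((∏ j ∈ (Finset.range (k + 1)).filter (fun j => k.testBit j),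
        (1 - (X : ℤ[X]) ^ (2 ^ j))).coeff r ≠ 0 ↔ r &&& k = r) ∧
      (r &&& k = r →
        (∏ j ∈ (Finset.range (k + 1)).filter (fun j => k.testBit j),
            (1 - (X : ℤ[X]) ^ (2 ^ j))).coeff r =
          (-1 : ℤ) ^ ((Nat.digits 2 r).sum)) := by
  simp only [Nat.filter_range_testBit_eq_toFinset_bitIndices, coeff_prod_one_sub_X_pow_two_pow,
    Nat.toFinset_bitIndices_subset_iff, Nat.sum_digits_two_eq_length_bitIndices]
  split_ifs with h <;> simp [h]
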